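/- For the two-state chain and every real t with |t| < 1, the generating functions at k = 0 satisfy G_0(t,0) = (1 - r t)/(1 - (1-q)t) and G_1(t,0) = 1/(1 - (1-q)t), where r = 1 - p - q; in particular the defining series converge. -/

import Mathlib

open Matrix Finset

/-- Transition matrix of the two-state chain with parameters `p`, `q`. -/
noncomputable def twoStateP (p q : ℝ) : Matrix (Fin 2) (Fin 2) ℝ :=
  !![1 - p, p; q, 1 - q]

/-- `g2 p q i n k` is the probability that the two-state chain started at `i`
spends exactly `k` of the times `1,…,n` in state `0`. -/
noncomputable def g2 (p q : ℝ) (i : Fin 2) (n k : ℕ) : ℝ :=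
  ∑ x ∈ Finset.univ.filter
      (fun x : Fin (n + 1) → Fin 2 => x 0 = i ∧
        (Finset.univ.filter (fun m : Fin n => x m.succ = 0)).card = k),
    ∏ m : Fin n, twoStateP p q (x m.castSucc) (x m.succ)

lemma g2_key (p q : ℝ) (i : Fin 2) (n : ℕ) :
    g2 p q i n 0 = ∏ m : Fin n,
      twoStateP p q ((fun j : Fin (n+1) => if j = 0 then i else 1) m.castSucc)
        ((fun j : Fin (n+1) => if j = 0 then i else 1) m.succ) := by
  have hset : (Finset.univ.filter
      (fun x : Fin (n + 1) → Fin 2 => x 0 = i ∧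
        (Finset.univ.filter (fun m : Fin n => x m.succ = 0)).card = 0))
      = {fun j : Fin (n+1) => if j = 0 then i else 1} := by
    ext x
    simp only [Finset.mem_filter, Finset.mem_univ, true_and, Finset.mem_singleton]
    constructor
    · rintro ⟨h0, h1⟩
      have hemp := Finset.card_eq_zero.mp h1
      funext j
      refine Fin.cases ?_ ?_ j
      · simpa using h0
      · intro m
        have hne : x m.succ ≠ 0 := fun hm =>
          Finset.notMem_empty m (hemp ▸ Finset.mem_filter.mpr ⟨Finset.mem_univ m, hm⟩)
        have := Fin.eq_one_of_ne_zero _ hne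
        simp [this, Fin.succ_ne_zero]
    · rintro rfl
      refine ⟨by simp, ?_⟩
      rw [Finset.card_eq_zero, Finset.filter_eq_empty_iff]
      intro m _
      simp [Fin.succ_ne_zero]
  rw [g2, hset, Finset.sum_singleton]

lemma g2_succ (p q : ℝ) (i : Fin 2) (n : ℕ) :
    g2 p q i (n+1) 0 = twoStateP p q i 1 * (1 - q) ^ n := by
  rw [g2_key, Fin.prod_univ_succ]
  congr 1
  trans ∏ _m : Fin n, (1 - q)
  · refine Finset.prod_congr rfl fun m _ => ?_
    have h1 : (Fin.succ m).castSucc ≠ (0 : Fin (n+2)) := by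
      simp [Fin.ext_iff]
    have h2 : (Fin.succ m).succ ≠ (0 : Fin (n+2)) := Fin.succ_ne_zero _
    simp [h1, h2, twoStateP]
  · simp

lemma g2_zero' (p q : ℝ) (i : Fin 2) : g2 p q i 0 0 = 1 := by
  rw [g2_key]; simp

lemma g2_one (p q : ℝ) (n : ℕ) : g2 p q 1 n 0 = (1 - q) ^ n := by
  cases n with
  | zero => simp [g2_zero']
  | succ n =>
      rw [g2_succ]
      have : twoStateP p q 1 1 = 1 - q := by simp [twoStateP]
      rw [this, pow_succ]; ring

lemma g2_zero_i (p q : ℝ) (n : ℕ) : g2 p q 0 (n+1) 0 = p * (1 - q) ^ n := by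
  rw [g2_succ]
  have : twoStateP p q 0 1 = p := by simp [twoStateP]
  rw [this]

theorem stmt11 (p q : ℝ) (hp : p ∈ Set.Ioo (0 : ℝ) 1) (hq : q ∈ Set.Ioo (0 : ℝ) 1)
    (r : ℝ) (hr : r = 1 - p - q) (t : ℝ) (ht : |t| < 1) :
    Summable (fun n : ℕ => g2 p q 0 n 0 * t ^ n) ∧
    Summable (fun n : ℕ => g2 p q 1 n 0 * t ^ n) ∧
    (∑' n : ℕ, g2 p q 0 n 0 * t ^ n) = (1 - r * t) / (1 - (1 - q) * t) ∧
    (∑' n : ℕ, g2 p q 1 n 0 * t ^ n) = 1 / (1 - (1 - q) * t) := by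
  have hu : |(1 - q) * t| < 1 := by
    rw [abs_mul]
    have h1 : |1 - q| < 1 := by rw [abs_lt]; constructor <;> [linarith [hq.2]; linarith [hq.1]]
    have := abs_nonneg t
    calc |1 - q| * |t| ≤ 1 * |t| := by nlinarith [abs_nonneg (1-q)]
      _ < 1 := by simpa using ht
  have hgeo : Summable (fun n : ℕ => ((1 - q) * t) ^ n) :=
    summable_geometric_of_abs_lt_one hu
  have hgeo_sum : (∑' n : ℕ, ((1 - q) * t) ^ n) = 1 / (1 - (1 - q) * t) := by
    rw [tsum_geometric_of_abs_lt_one hu, one_div]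
  have hden : 1 - (1 - q) * t ≠ 0 := by
    intro h
    have : (1 - q) * t = 1 := by linarith
    rw [this] at hu; simp at hu
  have heq1 : (fun n : ℕ => g2 p q 1 n 0 * t ^ n) = fun n => ((1 - q) * t) ^ n := by
    funext n; rw [g2_one, mul_pow]
  have hs1 : Summable (fun n : ℕ => g2 p q 1 n 0 * t ^ n) := by rw [heq1]; exact hgeo
  have ht1 : (∑' n : ℕ, g2 p q 1 n 0 * t ^ n) = 1 / (1 - (1 - q) * t) := by
    rw [heq1, hgeo_sum]
  have heq0 : (fun n : ℕ => g2 p q 0 (n+1) 0 * t ^ (n+1)) =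
      fun n => (p * t) * ((1 - q) * t) ^ n := by
    funext n; rw [g2_zero_i, mul_pow, pow_succ]; ring
  have hs0' : Summable (fun n : ℕ => g2 p q 0 (n+1) 0 * t ^ (n+1)) := by
    rw [heq0]; exact hgeo.mul_left _
  have hs0 : Summable (fun n : ℕ => g2 p q 0 n 0 * t ^ n) :=
    (summable_nat_add_iff 1).mp hs0'
  have ht0 : (∑' n : ℕ, g2 p q 0 n 0 * t ^ n) = (1 - r * t) / (1 - (1 - q) * t) := by
    rw [Summable.tsum_eq_zero_add hs0]
    have : (∑' n : ℕ, g2 p q 0 (n+1) 0 * t ^ (n+1)) = (p * t) * (1 / (1 - (1 - q) * t)) := by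
      rw [heq0, tsum_mul_left, hgeo_sum]
    rw [this, g2_zero']
    field_simp
    ring_nf
    rw [hr]
    have hD : (1 - t + t * q) ≠ 0 := by intro h; apply hden; linarith
    field_simp
    ring
  exact ⟨hs0, hs1, ht0, ht1⟩
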